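/- Let k ≥ 2 and k+2 ≤ j ≤ 2k. Then every bipartite graph on 2j−1−k vertices contains a k-sparse set of size j, and the complete bipartite graph K_{j−k−1,j−1} (on 2j−2−k vertices) contains no k-sparse j-set. Consequently, for i ≥ 2k+3, R_k^BIP(i,j) = 2j−1−k. -/

import Mathlib

open SimpleGraph

/-- A set `S` of vertices is `k`-sparse in `G` if every vertex of `S` has at most `k`
neighbors inside `S`. -/
def KSparse {V : Type*} (G : SimpleGraph V) (k : ℕ) (S : Set V) : Prop :=
  ∀ v ∈ S, ({u ∈ S | G.Adj v u}).ncard ≤ k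

/-- A set is `k`-dense in `G` if it is `k`-sparse in the complement of `G`. -/
def KDense {V : Type*} (G : SimpleGraph V) (k : ℕ) (S : Set V) : Prop :=
  KSparse Gᶜ k S

/-- `G` has a `k`-dense set of size `i`. -/
def HasKDense {V : Type*} (G : SimpleGraph V) (k i : ℕ) : Prop :=
  ∃ D : Set V, D.ncard = i ∧ KDense G k D

/-- `G` has a `k`-sparse set of size `j`. -/
def HasKSparse {V : Type*} (G : SimpleGraph V) (k j : ℕ) : Prop :=
  ∃ S : Set V, S.ncard = j ∧ KSparse G k S

/-- A cactus: every edge lies on at most one cycle, i.e. any two cycles sharing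
an edge have the same edge set. -/
def IsCactus {V : Type*} (G : SimpleGraph V) : Prop :=
  ∀ (u v : V) (c₁ : G.Walk u u) (c₂ : G.Walk v v), c₁.IsCycle → c₂.IsCycle →
    (∃ e, e ∈ c₁.edges ∧ e ∈ c₂.edges) → (∀ e, e ∈ c₁.edges ↔ e ∈ c₂.edges)

/-- A split graph: the vertices partition into a clique and an independent set. -/
def IsSplit {V : Type*} (G : SimpleGraph V) : Prop :=
  ∃ K : Set V, G.IsClique K ∧ Gᶜ.IsClique Kᶜ

/-- A cograph: no induced path on four vertices. -/
def IsCograph {V : Type*} (G : SimpleGraph V) : Prop :=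
  ¬ ∃ f : Fin 4 ↪ V, ∀ a b : Fin 4, G.Adj (f a) (f b) ↔ (SimpleGraph.pathGraph 4).Adj a b

/-! Split a `2`-colourable graph on `2j - 1 - k` vertices into its colour classes `A`, `B`.
If one class has `j` vertices it is an independent `j`-set; otherwise both have at least
`j - k` vertices, and `min |A| k` vertices of `A` together with `j - min |A| k ≤ k` vertices
of `B` form a `k`-sparse `j`-set, since every vertex only sees the other class.
Conversely a `j`-set of `K_{j-k-1, j-1}` meets the small side, and such a vertex sees the at
least `k + 1` chosen vertices of the large side.
A `k`-dense set `D` in a triangle-free graph has minimum degree at least `|D| - k - 1`, and the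
two endpoints of an edge inside `D` have disjoint neighbourhoods, so `|D| ≤ 2k + 2`. -/

namespace SimpleGraph

variable {V W : Type*} {G : SimpleGraph V} {H : SimpleGraph W} {k : ℕ}

lemma kSparse_of_isIndepSet {S : Set V} (hS : G.IsIndepSet S) : KSparse G k S := by
  intro v hv
  have hempty : {u ∈ S | G.Adj v u} = ∅ :=
    Set.eq_empty_of_forall_notMem fun u ⟨hu, hadj⟩ => hS hv hu hadj.ne hadj
  simp [hempty]

lemma kSparse_union_of_isIndepSet [Finite V] {S T : Set V} (hS : G.IsIndepSet S)
    (hT : G.IsIndepSet T) (hSk : S.ncard ≤ k) (hTk : T.ncard ≤ k) : KSparse G k (S ∪ T) := by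
  have key : ∀ {S T : Set V}, G.IsIndepSet S → T.ncard ≤ k → ∀ v ∈ S,
      ({u ∈ S ∪ T | G.Adj v u}).ncard ≤ k := by
    intro S T hS hTk v hv
    refine (Set.ncard_le_ncard fun u (hu : u ∈ S ∪ T ∧ G.Adj v u) => ?_).trans hTk
    exact hu.1.resolve_left fun huS => hS hv huS hu.2.ne hu.2
  rintro v (hv | hv)
  · exact key hS hTk v hv
  · simpa only [Set.union_comm] using key hT hSk v hv

lemma hasKSparse_of_isIndepSet [Finite V] {A : Set V} (hA : G.IsIndepSet A) {j : ℕ}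
    (hj : j ≤ A.ncard) : HasKSparse G k j := by
  obtain ⟨S, hSA, hS⟩ := Set.exists_subset_card_eq hj
  exact ⟨S, hS, kSparse_of_isIndepSet (hA.mono hSA)⟩

lemma hasKSparse_add_of_isIndepSet [Finite V] {A B : Set V} (hA : G.IsIndepSet A)
    (hB : G.IsIndepSet B) (hAB : Disjoint A B) {a b : ℕ} (ha : a ≤ A.ncard) (hb : b ≤ B.ncard)
    (hak : a ≤ k) (hbk : b ≤ k) : HasKSparse G k (a + b) := by
  obtain ⟨S, hSA, rfl⟩ := Set.exists_subset_card_eq ha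
  obtain ⟨T, hTB, rfl⟩ := Set.exists_subset_card_eq hb
  refine ⟨S ∪ T, Set.ncard_union_eq (hAB.mono hSA hTB), ?_⟩
  exact kSparse_union_of_isIndepSet (hA.mono hSA) (hB.mono hTB) hak hbk

theorem hasKSparse_of_colorable_two [Finite V] (hG : G.Colorable 2) {j : ℕ}
    (hjV : j ≤ Nat.card V) (hjk : j ≤ 2 * k) (hV : 2 * j ≤ Nat.card V + k + 1) :
    HasKSparse G k j := by
  obtain ⟨C⟩ := hG
  let A : Set V := {v | C v = 0}
  have hA : G.IsIndepSet A := fun v hv u hu _ hadj => C.valid hadj (hv.trans hu.symm)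
  have hAc : G.IsIndepSet Aᶜ := fun v hv u hu _ hadj =>
    C.valid hadj ((Fin.eq_one_of_ne_zero _ hv).trans (Fin.eq_one_of_ne_zero _ hu).symm)
  have hcard := Set.ncard_add_ncard_compl A
  by_cases hjA : j ≤ A.ncard
  · exact hasKSparse_of_isIndepSet hA hjA
  by_cases hjAc : j ≤ Aᶜ.ncard
  · exact hasKSparse_of_isIndepSet hAc hjAc
  have hsum : min A.ncard k + (j - min A.ncard k) = j := by omega
  exact hsum ▸ hasKSparse_add_of_isIndepSet hA hAc disjoint_compl_right
    (min_le_left _ _) (by omega) (min_le_right _ _) (by omega)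

lemma KDense.ncard_le_ncard_adj [Finite V] {D : Set V} (hD : KDense G k D) {v : V}
    (hv : v ∈ D) : D.ncard ≤ ({u ∈ D | G.Adj v u}).ncard + k + 1 := by
  have hcover : D ⊆ insert v ({u ∈ D | G.Adj v u} ∪ {u ∈ D | Gᶜ.Adj v u}) := by
    intro u hu
    by_cases hvu : v = u
    · exact .inl hvu.symm
    · by_cases hadj : G.Adj v u
      · exact .inr (.inl ⟨hu, hadj⟩)
      · exact .inr (.inr ⟨hu, (compl_adj G v u).mpr ⟨hvu, hadj⟩⟩)
  calc D.ncard ≤ (insert v ({u ∈ D | G.Adj v u} ∪ {u ∈ D | Gᶜ.Adj v u})).ncard :=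
        Set.ncard_le_ncard hcover
    _ ≤ ({u ∈ D | G.Adj v u}).ncard + ({u ∈ D | Gᶜ.Adj v u}).ncard + 1 :=
        (Set.ncard_insert_le _ _).trans (Nat.add_le_add_right (Set.ncard_union_le _ _) 1)
    _ ≤ ({u ∈ D | G.Adj v u}).ncard + k + 1 := by
        have := hD v hv
        omega

theorem not_hasKDense_of_cliqueFree_three [Finite V] (hG : G.CliqueFree 3) {i : ℕ}
    (hi : 2 * k + 3 ≤ i) : ¬ HasKDense G k i := by
  rintro ⟨D, rfl, hD⟩
  obtain ⟨v, hv⟩ := Set.nonempty_of_ncard_ne_zero (by omega : D.ncard ≠ 0)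
  have hdeg_v := hD.ncard_le_ncard_adj hv
  obtain ⟨u, hu, hvu⟩ :=
    Set.nonempty_of_ncard_ne_zero (by omega : ({u ∈ D | G.Adj v u}).ncard ≠ 0)
  have hdeg_u := hD.ncard_le_ncard_adj hu
  have hdisj : Disjoint {w ∈ D | G.Adj v w} {w ∈ D | G.Adj u w} :=
    Set.disjoint_left.mpr fun w ⟨_, hvw⟩ ⟨_, huw⟩ => by
      classical exact hG {v, u, w} (is3Clique_triple_iff.mpr ⟨hvu, hvw, huw⟩)
  have hsub : {w ∈ D | G.Adj v w} ∪ {w ∈ D | G.Adj u w} ⊆ D :=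
    fun w hw => hw.elim (·.1) (·.1)
  have := Set.ncard_union_eq hdisj ▸ Set.ncard_le_ncard hsub
  omega

lemma not_hasKSparse_completeBipartiteGraph [Finite V] [Finite W] {j : ℕ}
    (hV : Nat.card V + k < j) (hW : Nat.card W < j) :
    ¬ HasKSparse (completeBipartiteGraph V W) k j := by
  rintro ⟨S, hS, hsp⟩
  have hrange : (Set.range (Sum.inr : W → V ⊕ W)).ncard < S.ncard := by
    rwa [Set.ncard_range_of_injective Sum.inr_injective, hS]
  obtain ⟨v, hvS, hv⟩ := Set.exists_mem_notMem_of_ncard_lt_ncard hrange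
  obtain ⟨a, rfl⟩ : ∃ a, Sum.inl a = v := by
    cases v with
    | inl a => exact ⟨a, rfl⟩
    | inr b => exact absurd ⟨b, rfl⟩ hv
  have hnbhd :
      {u ∈ S | (completeBipartiteGraph V W).Adj (Sum.inl a) u} = S \ Set.range Sum.inl := by
    ext (u | u) <;> simp
  have := Set.le_ncard_sdiff (Set.range (Sum.inl : V → V ⊕ W)) S
  rw [Set.ncard_range_of_injective Sum.inl_injective, ← hnbhd] at this
  have := hsp _ hvS
  omega

lemma HasKSparse.of_iso (e : G ≃g H) {j : ℕ} (h : HasKSparse G k j) : HasKSparse H k j := by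
  obtain ⟨S, hS, hsp⟩ := h
  refine ⟨e '' S, by rw [Set.ncard_image_of_injective _ e.injective, hS], ?_⟩
  rintro _ ⟨v, hv, rfl⟩
  have hnbhd : {u ∈ e '' S | H.Adj (e v) u} = e '' {u ∈ S | G.Adj v u} := by
    ext u
    obtain ⟨u, rfl⟩ := e.surjective u
    simp [e.injective.mem_set_image, e.map_adj_iff]
  rw [hnbhd, Set.ncard_image_of_injective _ e.injective]
  exact hsp v hv

end SimpleGraph

theorem stmt16_general (k j : ℕ) (hj1 : k + 2 ≤ j) (hj2 : j ≤ 2 * k) :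
    (∀ G : SimpleGraph (Fin (2 * j - 1 - k)), G.Colorable 2 →
        HasKSparse G k j) ∧
    ¬ HasKSparse (completeBipartiteGraph (Fin (j - k - 1)) (Fin (j - 1))) k j ∧
    (∀ i, 2 * k + 3 ≤ i →
      (∀ G : SimpleGraph (Fin (2 * j - 1 - k)), G.Colorable 2 →
          HasKDense G k i ∨ HasKSparse G k j) ∧
      (∃ G : SimpleGraph (Fin (2 * j - 2 - k)),
          G.Colorable 2 ∧ ¬ HasKDense G k i ∧ ¬ HasKSparse G k j)) := by
  have hsparse (G : SimpleGraph (Fin (2 * j - 1 - k))) (hG : G.Colorable 2) : HasKSparse G k j :=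
    hasKSparse_of_colorable_two hG (by rw [Nat.card_fin]; omega) hj2 (by rw [Nat.card_fin]; omega)
  let K := completeBipartiteGraph (Fin (j - k - 1)) (Fin (j - 1))
  have hK : ¬ HasKSparse K k j :=
    not_hasKSparse_completeBipartiteGraph (by rw [Nat.card_fin]; omega)
      (by rw [Nat.card_fin]; omega)
  refine ⟨hsparse, hK, fun i hi => ⟨fun G hG => .inr (hsparse G hG), ?_⟩⟩
  let e : Fin (j - k - 1) ⊕ Fin (j - 1) ≃ Fin (2 * j - 2 - k) :=
    finSumFinEquiv.trans (finCongr (by omega))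
  have hKcol : K.Colorable 2 := by
    simpa using (CompleteBipartiteGraph.bicoloring _ _).colorable
  have hcol : (K.map e.toEmbedding).Colorable 2 := .of_hom (Iso.map e K).symm.toHom hKcol
  exact ⟨_, hcol, not_hasKDense_of_cliqueFree_three (hcol.cliqueFree (by norm_num)) hi,
    fun h => hK (h.of_iso (Iso.map e K).symm)⟩

theorem stmt16 (k j : ℕ) (hk : 2 ≤ k) (hj1 : k + 2 ≤ j) (hj2 : j ≤ 2 * k) :
    (∀ G : SimpleGraph (Fin (2 * j - 1 - k)), G.Colorable 2 →
        HasKSparse G k j) ∧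
    ¬ HasKSparse (completeBipartiteGraph (Fin (j - k - 1)) (Fin (j - 1))) k j ∧
    (∀ i, 2 * k + 3 ≤ i →
      (∀ G : SimpleGraph (Fin (2 * j - 1 - k)), G.Colorable 2 →
          HasKDense G k i ∨ HasKSparse G k j) ∧
      (∃ G : SimpleGraph (Fin (2 * j - 2 - k)),
          G.Colorable 2 ∧ ¬ HasKDense G k i ∧ ¬ HasKSparse G k j)) :=
  stmt16_general k j hj1 hj2
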